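/- arXiv:2510.23476 — 3 statements merged into one kernel-verified Lean document; each statement's English description precedes it below -/
import Mathlib

section
/- Let b_t be a sequence in ℝ with b_1 ∈ [0,1], updated by b_{t+1} = b_t + η·(1{s_t > b_t} − ε) where s_t ∈ [0,1], η > 0, and ε ∈ [0,1]. Then for all t > 1, b_t ∈ [−ηε, 1 + η(1−ε)]. -/
/-!
The interval `[lo - ηε, hi + η(1-ε)]` around the score range `[lo, hi]` is invariant under the
update: the threshold moves down (by `ηε`) only when `b ≥ s ≥ lo`, and up (by `η(1-ε)`) only
when `b < s ≤ hi`.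
-/

open Set

noncomputable def thresholdStep (η ε s b : ℝ) : ℝ :=
  b + η * ((if s > b then (1 : ℝ) else 0) - ε)

section

variable {η ε lo hi : ℝ}

lemma Icc_subset_Icc_sub_mul_add_mul (hη : 0 ≤ η) (hε : ε ∈ Icc (0 : ℝ) 1) :
    Icc lo hi ⊆ Icc (lo - η * ε) (hi + η * (1 - ε)) :=
  Icc_subset_Icc (sub_le_self _ (mul_nonneg hη hε.1))
    (le_add_of_nonneg_right (mul_nonneg hη (sub_nonneg.2 hε.2)))

lemma thresholdStep_mem_Icc {s b : ℝ} (hη : 0 ≤ η) (hε : ε ∈ Icc (0 : ℝ) 1)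
    (hs : s ∈ Icc lo hi) (hb : b ∈ Icc (lo - η * ε) (hi + η * (1 - ε))) :
    thresholdStep η ε s b ∈ Icc (lo - η * ε) (hi + η * (1 - ε)) := by
  have hηε : 0 ≤ η * ε := mul_nonneg hη hε.1
  have hηε' : 0 ≤ η * (1 - ε) := mul_nonneg hη (sub_nonneg.2 hε.2)
  unfold thresholdStep
  split_ifs with hsb
  · constructor <;> linarith [hb.1, hs.2]
  · constructor <;> linarith [hb.2, hs.1, not_lt.mp hsb]

end

/-- Online threshold update boundedness: with `b 1 ∈ [0,1]`, scores in `[0,1]`,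
`η > 0`, `ε ∈ [0,1]`, and update `b (t+1) = b t + η (1{s t > b t} − ε)`,
every `b t` with `t > 1` lies in `[−ηε, 1 + η(1−ε)]`. -/
theorem online_threshold_bounded (η ε : ℝ) (b s : ℕ → ℝ)
    (hη : 0 < η) (hε : ε ∈ Set.Icc (0:ℝ) 1)
    (hb1 : b 1 ∈ Set.Icc (0:ℝ) 1)
    (hs : ∀ t, s t ∈ Set.Icc (0:ℝ) 1)
    (hupd : ∀ t ≥ 1, b (t + 1) = b t + η * ((if s t > b t then (1:ℝ) else 0) - ε)) :
    ∀ t > 1, b t ∈ Set.Icc (-(η * ε)) (1 + η * (1 - ε)) := by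
  suffices h : ∀ t ≥ 1, b t ∈ Icc (0 - η * ε) (1 + η * (1 - ε)) by
    intro t ht
    simpa using h t ht.le
  intro t ht
  induction t, ht using Nat.le_induction with
  | base => exact Icc_subset_Icc_sub_mul_add_mul hη.le hε hb1
  | succ t ht ih =>
    rw [hupd t ht]
    exact thresholdStep_mem_Icc hη.le hε (hs t) ih
end

section
/- Let S_1,…,S_n, S_{n+1} be exchangeable real-valued random variables, and let Q = Quantile_{1−ε}({S_1,…,S_n} ∪ {∞}) denote the ⌈(1−ε)(n+1)⌉-th smallest value of the augmented multiset. Then P(S_{n+1} ≤ Q) ≥ 1 − ε. -/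
/-!
Put `k = ⌈(1 - ε)(n + 1)⌉` and let `R_j` be the number of scores strictly below `S_j`. For every
realisation at least `k` of the `n + 1` indices satisfy `R_j < k` (an index of minimal score
outside that set would lie in it), so `∑ j, P (R_j < k) ≥ k`. Exchangeability makes these
probabilities equal, hence `P (R_{n+1} < k) ≥ k / (n + 1) ≥ 1 - ε`, and `R_{n+1} < k` is exactly
the event that `S_{n+1}` is at most the `k`-th smallest of the augmented calibration scores.
-/

open MeasureTheory

/-- The `k`-th smallest element of a list of extended reals (`⊤` if out of range). -/
noncomputable def orderStat (l : List EReal) (k : ℕ) : EReal :=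
  (l.mergeSort (fun a b => decide (a ≤ b))).getD (k - 1) ⊤

open Finset
open scoped ENNReal

theorem List.le_getD_top_iff_countP_le {α : Type*} [LinearOrder α] [OrderTop α] {t : α} :
    ∀ {s : List α}, s.Pairwise (· ≤ ·) → ∀ k : ℕ, (t ≤ s.getD k ⊤ ↔ s.countP (· < t) ≤ k)
  | [], _, k => by simp
  | a :: s, hs, k => by
    rw [pairwise_cons] at hs
    rcases lt_or_ge a t with hat | hta
    · cases k with
      | zero => simp [hat]
      | succ k =>
        rw [getD_cons_succ, countP_cons_of_pos (by simpa using hat),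
          le_getD_top_iff_countP_le hs.2 k]
        omega
    · have hge : ∀ b ∈ a :: s, t ≤ b := by
        simpa using ⟨hta, fun b hb => hta.trans (hs.1 b hb)⟩
      have hcount : (a :: s).countP (· < t) = 0 :=
        countP_eq_zero.2 fun b hb => by simpa using hge b hb
      refine iff_of_true ?_ (by omega)
      rcases lt_or_ge k (a :: s).length with hk | hk
      · rw [getD_eq_getElem _ _ hk]
        exact hge _ (getElem_mem hk)
      · rw [getD_eq_default _ _ hk]
        exact le_top

theorem le_orderStat_iff {l : List EReal} {t : EReal} {k : ℕ} (hk : 0 < k) :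
    t ≤ orderStat l k ↔ l.countP (· < t) < k := by
  rw [orderStat, List.le_getD_top_iff_countP_le (List.pairwise_mergeSort' _ l),
    (List.mergeSort_perm l _).countP_eq]
  omega

theorem List.countP_ofFn {α : Type*} (p : α → Prop) [DecidablePred p] :
    ∀ {n : ℕ} (f : Fin n → α), (List.ofFn f).countP (p ·) = #{i | p (f i)}
  | 0, _ => by simp
  | n + 1, f => by
    rw [ofFn_succ, countP_cons, countP_ofFn p, Fin.card_filter_univ_succ]
    split_ifs <;> simp_all

section StrictRank

variable {ι α : Type*} [Fintype ι] [LinearOrder α]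

def strictRank (x : ι → α) (j : ι) : ℕ := #{i | x i < x j}

theorem strictRank_comp_perm (x : ι → α) (σ : Equiv.Perm ι) (j : ι) :
    strictRank (x ∘ σ) j = strictRank x (σ j) := by
  simp only [strictRank, Function.comp_apply]
  exact card_equiv σ (by simp)

theorem le_card_strictRank_lt {k : ℕ} (hk : k ≤ Fintype.card ι) (x : ι → α) :
    k ≤ #{j | strictRank x j < k} := by
  by_contra! hlt
  have hne : ({j | ¬strictRank x j < k} : Finset ι).Nonempty := by
    rw [← Finset.card_pos]
    have := card_filter_add_card_filter_not (s := univ) fun j => strictRank x j < k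
    rw [card_univ] at this
    omega
  obtain ⟨j, hj, hmin⟩ := exists_min_image _ x hne
  have hsub : ({i | x i < x j} : Finset ι) ⊆ ({j | strictRank x j < k} : Finset ι) := by
    intro i hi
    by_contra hik
    exact (hmin i (by simpa using hik)).not_gt (by simpa using hi)
  exact (by simpa using hj : k ≤ strictRank x j).not_gt ((card_le_card hsub).trans_lt hlt)

theorem strictRank_last_eq_card {n : ℕ} (x : Fin (n + 1) → α) :
    strictRank x (Fin.last n) = #{i : Fin n | x i.castSucc < x (Fin.last n)} := by
  simp only [strictRank, card_filter, Fin.sum_univ_castSucc, lt_irrefl, if_false, add_zero]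

end StrictRank

theorem le_orderStat_append_top_iff {n k : ℕ} (hk : 0 < k) (x : Fin (n + 1) → ℝ) :
    (x (Fin.last n) : EReal) ≤
        orderStat (List.ofFn (fun i : Fin n => (x i.castSucc : EReal)) ++ [⊤]) k ↔
      strictRank x (Fin.last n) < k := by
  rw [le_orderStat_iff hk, List.countP_append, List.countP_ofFn, strictRank_last_eq_card]
  simp [EReal.coe_lt_coe_iff]

section Exchangeable

variable {Ω ι α : Type*} [MeasurableSpace Ω] [Fintype ι] [LinearOrder α] [TopologicalSpace α]
  [OrderClosedTopology α] [SecondCountableTopology α] [MeasurableSpace α] [OpensMeasurableSpace α]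

theorem measurable_strictRank (j : ι) : Measurable fun x : ι → α => strictRank x j := by
  simp only [strictRank, card_filter]
  exact Finset.measurable_sum _ fun i _ =>
    Measurable.ite (measurableSet_lt (measurable_pi_apply i) (measurable_pi_apply j))
      measurable_const measurable_const

theorem measure_strictRank_lt_eq (P : Measure Ω) {X : Ω → ι → α} (hX : Measurable X)
    (hexch : ∀ σ : Equiv.Perm ι, P.map (fun ω => X ω ∘ σ) = P.map X) (k : ℕ) (j j' : ι) :
    P {ω | strictRank (X ω) j < k} = P {ω | strictRank (X ω) j' < k} := by
  classical
  set σ := Equiv.swap j' j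
  have hA : MeasurableSet {x : ι → α | strictRank x j' < k} :=
    measurable_strictRank j' measurableSet_Iio
  have hXσ : Measurable fun ω => X ω ∘ σ := by fun_prop
  calc P {ω | strictRank (X ω) j < k}
      = P.map (fun ω => X ω ∘ σ) {x | strictRank x j' < k} := by
        rw [Measure.map_apply hXσ hA]
        simp [σ, strictRank_comp_perm]
    _ = P {ω | strictRank (X ω) j' < k} := by rw [hexch, Measure.map_apply hX hA]; rfl

theorem le_card_mul_measure_strictRank_lt (P : Measure Ω) [IsProbabilityMeasure P]
    {X : Ω → ι → α} (hX : Measurable X)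
    (hexch : ∀ σ : Equiv.Perm ι, P.map (fun ω => X ω ∘ σ) = P.map X)
    {k : ℕ} (hk : k ≤ Fintype.card ι) (j : ι) :
    (k : ℝ≥0∞) ≤ Fintype.card ι * P {ω | strictRank (X ω) j < k} := by
  set E : ι → Set Ω := fun j => {ω | strictRank (X ω) j < k}
  have hE : ∀ j, MeasurableSet (E j) := fun j =>
    (measurable_strictRank j).comp hX measurableSet_Iio
  calc (k : ℝ≥0∞) = ∫⁻ _, (k : ℝ≥0∞) ∂P := by simp
    _ ≤ ∫⁻ ω, ∑ j, (E j).indicator 1 ω ∂P := lintegral_mono fun ω => by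
        have := le_card_strictRank_lt hk (X ω)
        simp only [E, Set.indicator_apply, Pi.one_apply]
        rw [card_filter] at this
        exact_mod_cast this
    _ = ∑ j, P (E j) := by
        rw [lintegral_finsetSum _ fun j _ => measurable_one.indicator (hE j)]
        simp only [lintegral_indicator_one (hE _)]
    _ = Fintype.card ι * P (E j) := by
        simp [E, measure_strictRank_lt_eq P hX hexch k _ j]

end Exchangeable

/-- Split-conformal calibration lower bound: if `S 0, …, S n` are exchangeable
real random variables and `Q` is the `⌈(1−ε)(n+1)⌉`-th smallest value of the
first `n` scores augmented with `∞`, then `P(S_{n+1} ≤ Q) ≥ 1 − ε`. -/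
theorem conformal_quantile_coverage
    {Ω : Type*} [MeasurableSpace Ω] (P : Measure Ω) [IsProbabilityMeasure P]
    (n : ℕ) (S : Fin (n + 1) → Ω → ℝ) (hmeas : ∀ i, Measurable (S i))
    (hexch : ∀ σ : Equiv.Perm (Fin (n + 1)),
      Measure.map (fun ω => fun i => S (σ i) ω) P
        = Measure.map (fun ω => fun i => S i ω) P)
    (ε : ℝ) (hε0 : 0 < ε) (hε1 : ε < 1) :
    ENNReal.ofReal (1 - ε) ≤
      P {ω | (S (Fin.last n) ω : EReal) ≤
          orderStat
            ((List.ofFn fun i : Fin n => ((S i.castSucc ω : ℝ) : EReal)) ++ [⊤])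
            (⌈(1 - ε) * (n + 1)⌉.toNat)} := by
  set k := ⌈(1 - ε) * (n + 1)⌉.toNat with hk
  rw [Int.ceil_toNat] at hk
  have hk_pos : 0 < k := hk ▸ Nat.ceil_pos.2 (mul_pos (by linarith) (by positivity))
  have hk_le : k ≤ n + 1 := hk ▸ Nat.ceil_le.2 (by push_cast; nlinarith)
  have hk_ge : (1 - ε) * (n + 1) ≤ k := hk ▸ Nat.le_ceil _
  have hcov := le_card_mul_measure_strictRank_lt P (measurable_pi_lambda _ hmeas) hexch
    (by simpa using hk_le) (Fin.last n)
  have hset : {ω | (S (Fin.last n) ω : EReal) ≤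
      orderStat ((List.ofFn fun i : Fin n => ((S i.castSucc ω : ℝ) : EReal)) ++ [⊤]) k}
      = {ω | strictRank (fun i => S i ω) (Fin.last n) < k} :=
    Set.ext fun ω => le_orderStat_append_top_iff hk_pos (fun i => S i ω)
  rw [hset, ← ENNReal.mul_le_mul_iff_right (a := Fintype.card (Fin (n + 1))) (by simp)
    (by simp)]
  calc (Fintype.card (Fin (n + 1)) : ℝ≥0∞) * ENNReal.ofReal (1 - ε)
      = ENNReal.ofReal ((1 - ε) * (n + 1)) := by
        rw [mul_comm, ENNReal.ofReal_mul (by linarith)]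
        norm_cast
        simp
    _ ≤ k := by simpa using ENNReal.ofReal_le_ofReal hk_ge
    _ ≤ _ := hcov
end

section
/- Let (b_t) satisfy b_{t+1} = b_t + η(1{s_t > b_t} − ε) with η > 0, ε ∈ (0,1), s_t ∈ [0,1], b_1 ∈ [0,1]. Then for all T ≥ 1, Σ_{t=1}^T 1{s_t > b_t} ≤ εT + (1 + η(1−ε))/η and Σ_{t=1}^T 1{s_t > b_t} ≥ εT − (1 + ηε)/η. -/
/-!
Summing the update rule telescopes: `b (T+1) - b 1 = η (Σ_{t ≤ T} 1{s t > b t} - ε T)`.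
The threshold never leaves `[-ηε, 1 + η(1-ε)]`: it only rises when it lies below a score
in `[0,1]`, and only falls when it lies above one. Dividing the telescoped identity by `η`
turns this bound on `b (T+1) - b 1` into the two bounds on the number of errors.
-/

open Finset Set

theorem threshold_step_mem_Icc {η ε x σ : ℝ} (hη : 0 ≤ η) (hε0 : 0 ≤ ε) (hε1 : ε ≤ 1)
    (hσ : σ ∈ Icc (0 : ℝ) 1) (hx : x ∈ Icc (-(η * ε)) (1 + η * (1 - ε))) :
    x + η * ((if σ > x then (1 : ℝ) else 0) - ε) ∈ Icc (-(η * ε)) (1 + η * (1 - ε)) := by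
  have hdown : 0 ≤ η * ε := mul_nonneg hη hε0
  have hup : 0 ≤ η * (1 - ε) := mul_nonneg hη (sub_nonneg.mpr hε1)
  split_ifs with hfire
  · exact ⟨by linarith [hx.1], by linarith [hσ.2]⟩
  · exact ⟨by linarith [hσ.1, not_lt.mp hfire], by linarith [hx.2]⟩

theorem threshold_mem_Icc {η ε : ℝ} {b s : ℕ → ℝ} (hη : 0 ≤ η) (hε0 : 0 ≤ ε) (hε1 : ε ≤ 1)
    (hs : ∀ t, s t ∈ Icc (0 : ℝ) 1) (hb1 : b 1 ∈ Icc (0 : ℝ) 1)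
    (hupd : ∀ t ≥ 1, b (t + 1) = b t + η * ((if s t > b t then (1 : ℝ) else 0) - ε)) :
    ∀ t ≥ 1, b t ∈ Icc (-(η * ε)) (1 + η * (1 - ε)) := by
  intro t ht
  induction t, ht using Nat.le_induction with
  | base =>
    exact ⟨by linarith [hb1.1, mul_nonneg hη hε0],
      by linarith [hb1.2, mul_nonneg hη (sub_nonneg.mpr hε1)]⟩
  | succ t ht ih =>
    rw [hupd t ht]
    exact threshold_step_mem_Icc hη hε0 hε1 (hs t) ih

theorem threshold_sub_eq_mul_sum {η ε : ℝ} {b s : ℕ → ℝ}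
    (hupd : ∀ t ≥ 1, b (t + 1) = b t + η * ((if s t > b t then (1 : ℝ) else 0) - ε))
    {T : ℕ} (hT : 1 ≤ T) :
    b (T + 1) - b 1 = η * ((∑ t ∈ Icc 1 T, (if s t > b t then (1 : ℝ) else 0)) - ε * T) := by
  rw [← Finset.sum_Icc_sub hT b, Finset.sum_congr rfl fun t ht => by
    rw [hupd t (Finset.mem_Icc.mp ht).1, add_sub_cancel_left]]
  simp only [← Finset.mul_sum, Finset.sum_sub_distrib, Finset.sum_const, Nat.card_Icc,
    add_tsub_cancel_right, nsmul_eq_mul, mul_comm (T : ℝ) ε]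

/-- Finite-sample online guarantee when every step updates the threshold:
with `b (t+1) = b t + η (1{s t > b t} − ε)`, `η > 0`, `ε ∈ (0,1)`, scores in
`[0,1]` and `b 1 ∈ [0,1]`, for every `T ≥ 1` the number of errors satisfies
`εT − (1 + ηε)/η ≤ Σ_{t=1}^T 1{s t > b t} ≤ εT + (1 + η(1−ε))/η`. -/
theorem online_every_step_bounds (η ε : ℝ) (b s : ℕ → ℝ)
    (hη : 0 < η) (hε0 : 0 < ε) (hε1 : ε < 1)
    (hs : ∀ t, s t ∈ Set.Icc (0:ℝ) 1)
    (hb1 : b 1 ∈ Set.Icc (0:ℝ) 1)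
    (hupd : ∀ t ≥ 1, b (t + 1) = b t + η * ((if s t > b t then (1:ℝ) else 0) - ε)) :
    ∀ T : ℕ, 1 ≤ T →
      (∑ t ∈ Finset.Icc 1 T, (if s t > b t then (1:ℝ) else 0))
          ≤ ε * T + (1 + η * (1 - ε)) / η ∧
      ε * T - (1 + η * ε) / η
          ≤ ∑ t ∈ Finset.Icc 1 T, (if s t > b t then (1:ℝ) else 0) := by
  intro T hT
  have htel := threshold_sub_eq_mul_sum hupd hT
  obtain ⟨hlow, hhigh⟩ :=
    threshold_mem_Icc hη.le hε0.le hε1.le hs hb1 hupd (T + 1) (by omega)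
  constructor
  · rw [← sub_le_iff_le_add', le_div_iff₀ hη, mul_comm]
    linarith [hb1.1]
  · rw [sub_le_comm, le_div_iff₀ hη, mul_comm]
    linarith [hb1.2]
end
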